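/- (Interior points of the remainder set, step S² ⊆ S^i in the proof of Theorem 5.) Assume the avoidance hypothesis. Then for every u ∈ ℝ² with ‖u‖ < 1 and c·u₁ + d·u₂ ≠ 0, the point g(u) lies in the topological interior of the set S = {g(v) : v ∈ ℝ², ‖v‖ ≤ 1}. -/

import Mathlib

/-!
Write `P = p − o`, `X = x − o` for `p = x + Eu`, with `s = ‖P‖`, `r = ‖X‖`. The remainder `g` is
strictly differentiable at `u` with derivative `(J_h(p) − J_h(x)) E`, and
`det (J_h(p) − J_h(x)) = (s + r)(s r − ⟪P, X⟫) / (s² r²)`. By Lagrange's identity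
`s² r² = ⟪P, X⟫² + (P × X)²`, this is nonzero as soon as the cross product `P × X = c u₁ + d u₂`
is. The inverse function theorem then maps the open unit ball, a neighbourhood of `u`, onto a
neighbourhood of `g(u)`.
-/

noncomputable section

/-- Matrix–vector multiplication, viewed as a map on the Euclidean plane. -/
def mv (M : Matrix (Fin 2) (Fin 2) ℝ) (u : EuclideanSpace ℝ (Fin 2)) :
    EuclideanSpace ℝ (Fin 2) := WithLp.toLp 2 (M.mulVec u)

/-- Range `r(p) = √((p₁−a)² + (p₂−b)²)` to the sensor located at `(a, b)`. -/
def rr (a b : ℝ) (p : EuclideanSpace ℝ (Fin 2)) : ℝ :=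
  Real.sqrt ((p 0 - a) ^ 2 + (p 1 - b) ^ 2)

/-- Bearing `θ(p)`: polar angle in `(−π, π]` of the complex number `(p₁−a) + i(p₂−b)`. -/
def theta (a b : ℝ) (p : EuclideanSpace ℝ (Fin 2)) : ℝ :=
  Complex.arg ⟨p 0 - a, p 1 - b⟩

/-- Jacobian matrix of the range–bearing measurement map at `p`. -/
def Jh (a b : ℝ) (p : EuclideanSpace ℝ (Fin 2)) : Matrix (Fin 2) (Fin 2) ℝ :=
  !![(p 0 - a) / rr a b p, (p 1 - b) / rr a b p;
     -(p 1 - b) / (rr a b p) ^ 2, (p 0 - a) / (rr a b p) ^ 2]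

/-- The range–bearing measurement map `h(p) = (r(p), θ(p))`. -/
def hMeas (a b : ℝ) (p : EuclideanSpace ℝ (Fin 2)) : EuclideanSpace ℝ (Fin 2) :=
  WithLp.toLp 2 ![rr a b p, theta a b p]

/-- The linearization remainder `g(u) = h(x + Eu) − h(x) − J_h(x)·(Eu)`. -/
def gRem (a b : ℝ) (x : EuclideanSpace ℝ (Fin 2)) (E : Matrix (Fin 2) (Fin 2) ℝ)
    (u : EuclideanSpace ℝ (Fin 2)) : EuclideanSpace ℝ (Fin 2) :=
  hMeas a b (x + mv E u) - hMeas a b x - mv (Jh a b x) (mv E u)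


local notation "ℝ²" => EuclideanSpace ℝ (Fin 2)

open Complex Matrix Topology

theorem HasStrictFDerivAt.image_mem_nhds {𝕜 E F : Type*} [NontriviallyNormedField 𝕜]
    [NormedAddCommGroup E] [NormedSpace 𝕜 E] [CompleteSpace E]
    [NormedAddCommGroup F] [NormedSpace 𝕜 F] [CompleteSpace F]
    {f : E → F} {f' : E ≃L[𝕜] F} {a : E} {s : Set E}
    (hf : HasStrictFDerivAt f (f' : E →L[𝕜] F) a) (hs : s ∈ 𝓝 a) :
    f '' s ∈ 𝓝 (f a) :=
  hf.map_nhds_eq_of_equiv ▸ Filter.image_mem_map hs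

theorem HasStrictFDerivAt.image_mem_nhds_of_det_ne_zero {𝕜 n : Type*} [RCLike 𝕜] [Fintype n]
    [DecidableEq n] {f : EuclideanSpace 𝕜 n → EuclideanSpace 𝕜 n} {M : Matrix n n 𝕜}
    {a : EuclideanSpace 𝕜 n} {s : Set (EuclideanSpace 𝕜 n)}
    (hf : HasStrictFDerivAt f (toEuclideanCLM (𝕜 := 𝕜) M) a) (hM : M.det ≠ 0) (hs : s ∈ 𝓝 a) :
    f '' s ∈ 𝓝 (f a) := by
  have hU : IsUnit (toEuclideanCLM (𝕜 := 𝕜) M) := (M.isUnit_iff_isUnit_det.mpr hM.isUnit).map _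
  exact HasStrictFDerivAt.image_mem_nhds (f' := ContinuousLinearEquiv.unitsEquiv 𝕜 _ hU.unit) hf hs

theorem mv_apply (M : Matrix (Fin 2) (Fin 2) ℝ) (u : ℝ²) (i : Fin 2) :
    mv M u i = M i 0 * u 0 + M i 1 * u 1 := by
  fin_cases i <;> simp [mv]

def relPos (a b : ℝ) (p : ℝ²) : ℂ := ⟨p 0 - a, p 1 - b⟩

section MeasurementMap

variable {a b : ℝ} {p : ℝ²}

theorem relPos_mem_slitPlane (hp : ¬(p 0 ≤ a ∧ p 1 = b)) : relPos a b p ∈ slitPlane := by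
  rw [not_and_or, not_le] at hp
  simpa [mem_slitPlane_iff, relPos, sub_eq_zero] using hp

theorem hasStrictFDerivAt_relPos :
    HasStrictFDerivAt (relPos a b)
      (orthonormalBasisOneI.repr.symm.toContinuousLinearEquiv : ℝ² →L[ℝ] ℂ) p := by
  have h : relPos a b = fun q => orthonormalBasisOneI.repr.symm q - (a + b * I) := by
    funext q
    apply Complex.ext <;> simp [relPos, orthonormalBasisOneI_repr_symm_apply]
  rw [h]
  exact orthonormalBasisOneI.repr.symm.toContinuousLinearEquiv.hasStrictFDerivAt.sub_const _

theorem rr_eq_norm_relPos : rr a b p = ‖relPos a b p‖ := by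
  rw [rr, Complex.norm_def, normSq_apply, relPos]
  ring_nf

theorem rr_ne_zero (hp : ¬(p 0 ≤ a ∧ p 1 = b)) : rr a b p ≠ 0 := by
  rw [rr_eq_norm_relPos]
  exact norm_ne_zero_iff.mpr (slitPlane_ne_zero (relPos_mem_slitPlane hp))

theorem hasStrictFDerivAt_rr (hp : rr a b p ≠ 0) :
    HasStrictFDerivAt (rr a b)
      (EuclideanSpace.proj (𝕜 := ℝ) (0 : Fin 2) ∘L toEuclideanCLM (𝕜 := ℝ) (Jh a b p)) p := by
  have h₀ := (EuclideanSpace.proj (𝕜 := ℝ) (0 : Fin 2)).hasStrictFDerivAt (x := p) |>.sub_const a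
  have h₁ := (EuclideanSpace.proj (𝕜 := ℝ) (1 : Fin 2)).hasStrictFDerivAt (x := p) |>.sub_const b
  have hne : (p 0 - a) ^ 2 + (p 1 - b) ^ 2 ≠ 0 := fun h => hp (by simp [rr, h])
  refine (((h₀.pow 2).add (h₁.pow 2)).sqrt hne).congr_fderiv ?_
  ext v
  simp only [PiLp.proj_apply, Pi.add_apply, one_div, _root_.mul_inv_rev, Nat.add_one_sub_one,
    pow_one, nsmul_eq_mul, Nat.cast_ofNat, smul_add, _root_.add_apply, _root_.smul_apply,
    smul_eq_mul, Jh, rr, neg_sub, ContinuousLinearMap.comp_apply, ofLp_toEuclideanCLM, mulVec,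
    dotProduct, of_apply, cons_val', cons_val_fin_one, cons_val_zero, Fin.sum_univ_two,
    cons_val_one]
  field_simp

theorem hasStrictFDerivAt_theta (hp : ¬(p 0 ≤ a ∧ p 1 = b)) :
    HasStrictFDerivAt (theta a b)
      (EuclideanSpace.proj (𝕜 := ℝ) (1 : Fin 2) ∘L toEuclideanCLM (𝕜 := ℝ) (Jh a b p)) p := by
  have hz := relPos_mem_slitPlane hp
  have hlog := (hasStrictFDerivAt_log_real hz).comp p hasStrictFDerivAt_relPos
  have htheta : theta a b = fun q => im (log (relPos a b q)) := by
    funext q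
    simp [theta, relPos, log_im]
  rw [htheta]
  refine (imCLM.hasStrictFDerivAt.comp p hlog).congr_fderiv ?_
  have hr : rr a b p ^ 2 = normSq (relPos a b p) := by
    rw [rr_eq_norm_relPos, normSq_eq_norm_sq]
  have hr₀ := rr_ne_zero hp
  ext v
  simp only [relPos, LinearIsometryEquiv.toContinuousLinearEquiv_symm,
    ContinuousLinearMap.smul_comp, ContinuousLinearMap.comp_apply, _root_.smul_apply,
    ContinuousLinearEquiv.coe_coe, LinearIsometryEquiv.coe_symm_toContinuousLinearEquiv,
    orthonormalBasisOneI_repr_symm_apply, one_apply_eq_self, smul_eq_mul, imCLM_apply, mul_im,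
    inv_re, normSq_mk, add_im, ofReal_im, ofReal_re, I_im, mul_one, I_re, mul_zero, add_zero,
    zero_add, inv_im, neg_sub, add_re, mul_re, sub_self, Jh, hr, PiLp.proj_apply,
    ofLp_toEuclideanCLM, mulVec, dotProduct, of_apply, cons_val', cons_val_fin_one, cons_val_one,
    Fin.sum_univ_two, cons_val_zero]
  field_simp
  ring

theorem hasStrictFDerivAt_hMeas (hp : ¬(p 0 ≤ a ∧ p 1 = b)) :
    HasStrictFDerivAt (hMeas a b) (toEuclideanCLM (𝕜 := ℝ) (Jh a b p)) p := by
  rw [hasStrictFDerivAt_euclidean]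
  intro i
  fin_cases i
  · exact hasStrictFDerivAt_rr (rr_ne_zero hp)
  · exact hasStrictFDerivAt_theta hp

end MeasurementMap

theorem hasStrictFDerivAt_gRem {a b : ℝ} {x : ℝ²} {E : Matrix (Fin 2) (Fin 2) ℝ} {u : ℝ²}
    (hp : ¬((x + mv E u) 0 ≤ a ∧ (x + mv E u) 1 = b)) :
    HasStrictFDerivAt (gRem a b x E)
      (toEuclideanCLM (𝕜 := ℝ) ((Jh a b (x + mv E u) - Jh a b x) * E)) u := by
  have hE : HasStrictFDerivAt (fun v => x + mv E v) (toEuclideanCLM (𝕜 := ℝ) E) u :=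
    (toEuclideanCLM (𝕜 := ℝ) E).hasStrictFDerivAt.const_add x
  have hlin :=
    (toEuclideanCLM (𝕜 := ℝ) (Jh a b x) ∘L toEuclideanCLM (𝕜 := ℝ) E).hasStrictFDerivAt (x := u)
  rw [map_mul, map_sub, ContinuousLinearMap.mul_def, ContinuousLinearMap.sub_comp]
  exact (((hasStrictFDerivAt_hMeas hp).comp u hE).sub_const (hMeas a b x)).sub hlin

/-- The left-hand side is `det (J(P) − J(X))` for the polar Jacobian `J`, where `s = ‖P‖` and
`r = ‖X‖`. -/
theorem det_polarJacobian_sub_ne_zero {P₀ P₁ X₀ X₁ s r : ℝ} (hs : 0 ≤ s) (hr : 0 ≤ r)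
    (hs₂ : s ^ 2 = P₀ ^ 2 + P₁ ^ 2) (hr₂ : r ^ 2 = X₀ ^ 2 + X₁ ^ 2)
    (hcross : P₀ * X₁ - P₁ * X₀ ≠ 0) :
    (P₀ / s - X₀ / r) * (P₀ / s ^ 2 - X₀ / r ^ 2) -
      (P₁ / s - X₁ / r) * (-P₁ / s ^ 2 - -X₁ / r ^ 2) ≠ 0 := by
  set D := P₀ * X₀ + P₁ * X₁
  have lagrange : (s * r) ^ 2 = D ^ 2 + (P₀ * X₁ - P₁ * X₀) ^ 2 := by
    rw [mul_pow, hs₂, hr₂]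
    ring
  have hD : D ^ 2 < (s * r) ^ 2 := by
    rw [lagrange]
    exact lt_add_of_pos_right _ (pow_pos (abs_pos.mpr hcross) 2 |>.trans_eq (sq_abs _))
  have hDsr : D < s * r := (abs_lt_of_sq_lt_sq' hD (mul_nonneg hs hr)).2
  have hsr : 0 < s * r := by nlinarith [sq_nonneg D]
  have hs₀ : s ≠ 0 := left_ne_zero_of_mul hsr.ne'
  have hr₀ : r ≠ 0 := right_ne_zero_of_mul hsr.ne'
  have hdet : (P₀ / s - X₀ / r) * (P₀ / s ^ 2 - X₀ / r ^ 2) -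
      (P₁ / s - X₁ / r) * (-P₁ / s ^ 2 - -X₁ / r ^ 2) =
        (s + r) * (s * r - D) / (s ^ 2 * r ^ 2) := by
    field_simp
    linear_combination (-r ^ 3) * hs₂ + (-s ^ 3) * hr₂
  rw [hdet]
  have hsum : s + r ≠ 0 := by positivity
  exact div_ne_zero (mul_ne_zero hsum (sub_ne_zero.mpr hDsr.ne')) (by positivity)

theorem det_Jh_sub_Jh_ne_zero {a b : ℝ} {p x : ℝ²}
    (hcross : (p 0 - a) * (x 1 - b) - (p 1 - b) * (x 0 - a) ≠ 0) :
    (Jh a b p - Jh a b x).det ≠ 0 := by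
  rw [det_fin_two]
  simp only [Jh, Matrix.sub_apply, of_apply, cons_val', cons_val_zero, cons_val_one, empty_val',
    cons_val_fin_one]
  exact det_polarJacobian_sub_ne_zero (Real.sqrt_nonneg _) (Real.sqrt_nonneg _)
    (Real.sq_sqrt (by positivity)) (Real.sq_sqrt (by positivity)) hcross

/-- **Interior points of the remainder set.** Under the avoidance hypothesis, if `‖u‖ < 1`
and `c·u₁ + d·u₂ ≠ 0` then `g(u)` is in the interior of `S = {g(v) : ‖v‖ ≤ 1}`. -/
theorem gRem_mem_interior
    (a b : ℝ) (x : EuclideanSpace ℝ (Fin 2)) (E : Matrix (Fin 2) (Fin 2) ℝ)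
    (hE : 0 < E.det)
    (havoid : ∀ u : EuclideanSpace ℝ (Fin 2), ‖u‖ ≤ 1 →
      ¬((x + mv E u) 0 ≤ a ∧ (x + mv E u) 1 = b))
    (c d : ℝ)
    (hc : c = E 0 0 * (x 1 - b) - E 1 0 * (x 0 - a))
    (hd : d = E 0 1 * (x 1 - b) - E 1 1 * (x 0 - a)) :
    ∀ u : EuclideanSpace ℝ (Fin 2), ‖u‖ < 1 → c * u 0 + d * u 1 ≠ 0 →
      gRem a b x E u ∈ interior {y : EuclideanSpace ℝ (Fin 2) |
        ∃ v : EuclideanSpace ℝ (Fin 2), ‖v‖ ≤ 1 ∧ gRem a b x E v = y} := by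
  intro u hu hcu
  have hcross : ((x + mv E u) 0 - a) * (x 1 - b) - ((x + mv E u) 1 - b) * (x 0 - a) ≠ 0 := by
    convert hcu using 1
    simp only [PiLp.add_apply, mv_apply, hc, hd]
    ring
  have hdet : ((Jh a b (x + mv E u) - Jh a b x) * E).det ≠ 0 := by
    rw [det_mul]
    exact mul_ne_zero (det_Jh_sub_Jh_ne_zero hcross) hE.ne'
  have hball : Metric.ball 0 1 ∈ 𝓝 u := Metric.isOpen_ball.mem_nhds (mem_ball_zero_iff.mpr hu)
  have himage := (hasStrictFDerivAt_gRem (havoid u hu.le)).image_mem_nhds_of_det_ne_zero hdet hball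
  refine interior_mono ?_ (mem_interior_iff_mem_nhds.mpr himage)
  rintro _ ⟨v, hv, rfl⟩
  exact ⟨v, (mem_ball_zero_iff.mp hv).le, rfl⟩
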